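/- Let n > 2 and let k ≥ 1 satisfy k+1 < n. Then the model M_n^k is k-bisimilar, but not (k+1)-bisimilar, to the model N_n^{k-1}. -/

import Mathlib

/-! # Common framework: superintuitionistic logics, Kripke frames and models -/

/-! ## Intuitionistic propositional formulas -/

inductive Form : Type
  | var : ℕ → Form
  | bot : Form
  | top : Form
  | and : Form → Form → Form
  | or  : Form → Form → Form
  | imp : Form → Form → Form
deriving DecidableEq

namespace Form

/-- Implication depth of a formula. -/
def depth : Form → ℕ
  | var _ => 0
  | bot => 0
  | top => 0
  | and φ ψ => max φ.depth ψ.depth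
  | or φ ψ => max φ.depth ψ.depth
  | imp φ ψ => max φ.depth ψ.depth + 1

/-- All propositional variables of the formula are among `p_0, …, p_{m-1}`. -/
def varsLt (m : ℕ) : Form → Prop
  | var p => p < m
  | bot => True
  | top => True
  | and φ ψ => φ.varsLt m ∧ ψ.varsLt m
  | or φ ψ => φ.varsLt m ∧ ψ.varsLt m
  | imp φ ψ => φ.varsLt m ∧ ψ.varsLt m

/-- Uniform substitution. -/
def subst (σ : ℕ → Form) : Form → Form
  | var p => σ p
  | bot => bot
  | top => top
  | and φ ψ => and (φ.subst σ) (ψ.subst σ)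
  | or φ ψ => or (φ.subst σ) (ψ.subst σ)
  | imp φ ψ => imp (φ.subst σ) (ψ.subst σ)

/-- Biconditional. -/
def iff (φ ψ : Form) : Form := and (imp φ ψ) (imp ψ φ)

/-- Negation. -/
def neg (φ : Form) : Form := imp φ bot

end Form

/-! ## IPC and superintuitionistic logics -/

/-- A Hilbert-style axiomatization of intuitionistic propositional logic. -/
inductive IPC : Form → Prop
  | ax1 (φ ψ : Form) : IPC (.imp φ (.imp ψ φ))
  | ax2 (φ ψ χ : Form) :
      IPC (.imp (.imp φ (.imp ψ χ)) (.imp (.imp φ ψ) (.imp φ χ)))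
  | andE1 (φ ψ : Form) : IPC (.imp (.and φ ψ) φ)
  | andE2 (φ ψ : Form) : IPC (.imp (.and φ ψ) ψ)
  | andI (φ ψ : Form) : IPC (.imp φ (.imp ψ (.and φ ψ)))
  | orI1 (φ ψ : Form) : IPC (.imp φ (.or φ ψ))
  | orI2 (φ ψ : Form) : IPC (.imp ψ (.or φ ψ))
  | orE (φ ψ χ : Form) :
      IPC (.imp (.imp φ χ) (.imp (.imp ψ χ) (.imp (.or φ ψ) χ)))
  | botE (φ : Form) : IPC (.imp .bot φ)
  | topI : IPC .top
  | mp (φ ψ : Form) : IPC (.imp φ ψ) → IPC φ → IPC ψ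

/-- The set of theorems of IPC. -/
def IPCSet : Set Form := {φ | IPC φ}

/-- A superintuitionistic logic: a set of formulas containing all theorems of
IPC, closed under modus ponens and uniform substitution. -/
def IsSILogic (L : Set Form) : Prop :=
  IPCSet ⊆ L ∧
  (∀ φ ψ : Form, Form.imp φ ψ ∈ L → φ ∈ L → ψ ∈ L) ∧
  (∀ (φ : Form) (σ : ℕ → Form), φ ∈ L → φ.subst σ ∈ L)

/-- `oplus L Γ` is the least superintuitionistic logic containing `L` and `Γ`
(written `L ⊕ Γ`). -/
def oplus (L Γ : Set Form) : Set Form :=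
  ⋂₀ {M : Set Form | IsSILogic M ∧ L ⊆ M ∧ Γ ⊆ M}

/-- A logic is `n`-uniform if every formula is provably equivalent in it to a
formula of implication depth at most `n`. -/
def Uniform (L : Set Form) (n : ℕ) : Prop :=
  ∀ φ : Form, ∃ ψ : Form, ψ.depth ≤ n ∧ Form.iff φ ψ ∈ L

/-- A logic is locally tabular if over each finite tuple of variables there are
only finitely many formulas up to provable equivalence. -/
def LocallyTabular (L : Set Form) : Prop :=
  ∀ m : ℕ, ∃ Φ : Finset Form, ∀ φ : Form, φ.varsLt m → ∃ ψ ∈ Φ, Form.iff φ ψ ∈ L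

/-! ## Kripke frames (posets) -/

structure Frame : Type 1 where
  W : Type
  le : W → W → Prop
  refl : ∀ x, le x x
  trans : ∀ x y z, le x y → le y z → le x z
  antisymm : ∀ x y, le x y → le y x → x = y

namespace Frame

def lt (F : Frame) (a b : F.W) : Prop := F.le a b ∧ a ≠ b

/-- A valuation is persistent if it is preserved upwards. -/
def Persistent (F : Frame) (V : ℕ → F.W → Prop) : Prop :=
  ∀ p a b, F.le a b → V p a → V p b

/-- Kripke forcing. -/
def force (F : Frame) (V : ℕ → F.W → Prop) : Form → F.W → Prop
  | .var p, w => V p w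
  | .bot, _ => False
  | .top, _ => True
  | .and φ ψ, w => F.force V φ w ∧ F.force V ψ w
  | .or φ ψ, w => F.force V φ w ∨ F.force V ψ w
  | .imp φ ψ, w => ∀ v, F.le w v → F.force V φ v → F.force V ψ v

/-- `F ⊩ φ`. -/
def Valid (F : Frame) (φ : Form) : Prop :=
  ∀ V : ℕ → F.W → Prop, F.Persistent V → ∀ w : F.W, F.force V φ w

def Rooted (F : Frame) : Prop := ∃ r, ∀ w, F.le r w

/-- The subposet on a subset of the carrier. -/
def restrict (F : Frame) (s : Set F.W) : Frame where
  W := s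
  le a b := F.le a.1 b.1
  refl a := F.refl a.1
  trans a b c h1 h2 := F.trans a.1 b.1 c.1 h1 h2
  antisymm a b h1 h2 := Subtype.ext (F.antisymm a.1 b.1 h1 h2)

/-- The rooted upset `↑z`. -/
def up (F : Frame) (z : F.W) : Frame := F.restrict {w | F.le z w}

/-- There is a chain of `d` elements in `↑w` starting at `w`. -/
def hasChainUp (F : Frame) (w : F.W) (d : ℕ) : Prop :=
  ∃ f : Fin d → F.W, (∀ i : Fin d, (i : ℕ) = 0 → f i = w) ∧
    (∀ i j : Fin d, (i : ℕ) < (j : ℕ) → F.lt (f i) (f j))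

/-- The depth of `w` is `d`: the longest chain in `↑w` has exactly `d` elements. -/
def depthEq (F : Frame) (w : F.W) (d : ℕ) : Prop :=
  F.hasChainUp w d ∧ ¬ F.hasChainUp w (d + 1)

/-- The covering relation of the poset. -/
def covBy (F : Frame) (a b : F.W) : Prop :=
  F.lt a b ∧ ∀ c, F.lt a c → F.lt c b → False

end Frame

/-- A p-morphism of posets. -/
def IsPMorphism (P Q : Frame) (f : P.W → Q.W) : Prop :=
  (∀ a b, P.le a b → Q.le (f a) (f b)) ∧
  (∀ a b, Q.le (f a) b → ∃ a', P.le a a' ∧ f a' = b)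

/-- `Q` is a p-morphic image of `P`. -/
def PMorphicImage (P Q : Frame) : Prop :=
  ∃ f : P.W → Q.W, IsPMorphism P Q f ∧ Function.Surjective f

/-- Order isomorphism of posets. -/
def FrameIso (P Q : Frame) : Prop :=
  ∃ f : P.W → Q.W, Function.Bijective f ∧ ∀ a b, P.le a b ↔ Q.le (f a) (f b)

/-- The logic of a class of posets. -/
def LogK (K : Set Frame) : Set Form := {φ | ∀ F ∈ K, F.Valid φ}

/-- The logic of a single poset. -/
def FrameLog (F : Frame) : Set Form := {φ | F.Valid φ}

/-- `J` is a Yankov formula for the finite rooted poset `Q`: a finite poset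
refutes `J` exactly when `Q` is isomorphic to a rooted upset of one of its
p-morphic images. -/
def IsYankov (J : Form) (Q : Frame) : Prop :=
  ∀ P : Frame, Finite P.W →
    (¬ P.Valid J ↔ ∃ G : Frame, PMorphicImage P G ∧ ∃ z : G.W, FrameIso (G.up z) Q)

/-! ## Rooted Kripke models over `n` propositional variables -/

structure Model (n : ℕ) : Type 1 where
  W : Type
  le : W → W → Prop
  refl : ∀ x, le x x
  trans : ∀ x y z, le x y → le y z → le x z
  antisymm : ∀ x y, le x y → le y x → x = y
  root : W
  rooted : ∀ w, le root w
  col : W → Set (Fin n)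
  mono : ∀ a b, le a b → col a ⊆ col b

namespace Model

/-- The underlying poset of a model. -/
def frame {n : ℕ} (M : Model n) : Frame :=
  ⟨M.W, M.le, M.refl, M.trans, M.antisymm⟩

def force {n : ℕ} (M : Model n) : Form → M.W → Prop
  | .var p, w => ∃ h : p < n, (⟨p, h⟩ : Fin n) ∈ M.col w
  | .bot, _ => False
  | .top, _ => True
  | .and φ ψ, w => M.force φ w ∧ M.force ψ w
  | .or φ ψ, w => M.force φ w ∨ M.force ψ w
  | .imp φ ψ, w => ∀ v, M.le w v → M.force φ v → M.force ψ v

/-- Satisfaction at the root of the model. -/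
def Sat {n : ℕ} (M : Model n) (φ : Form) : Prop := M.force φ M.root

/-- (Full) bisimilarity of two rooted models. -/
def Bisim {n : ℕ} (M N : Model n) : Prop :=
  ∃ S : M.W → N.W → Prop,
    S M.root N.root ∧
    (∀ a b, S a b → M.col a = N.col b) ∧
    (∀ a b a', S a b → M.le a a' → ∃ b', N.le b b' ∧ S a' b') ∧
    (∀ a b b', S a b → N.le b b' → ∃ a', M.le a a' ∧ S a' b')

/-- `k`-bisimilarity of the points `x, y`, via a decreasing chain
`S k ⊆ ⋯ ⊆ S 0` of relations. -/
def NBisimAt {n : ℕ} (M N : Model n) (k : ℕ) (x : M.W) (y : N.W) : Prop :=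
  ∃ S : ℕ → M.W → N.W → Prop,
    (∀ j a b, S (j + 1) a b → S j a b) ∧
    S k x y ∧
    (∀ a b, S 0 a b → M.col a = N.col b) ∧
    (∀ j a b a', j < k → S (j + 1) a b → M.le a a' →
        ∃ b', N.le b b' ∧ S j a' b') ∧
    (∀ j a b b', j < k → S (j + 1) a b → N.le b b' →
        ∃ a', M.le a a' ∧ S j a' b')

/-- `k`-bisimilarity of two rooted models. -/
def NBisim {n : ℕ} (M N : Model n) (k : ℕ) : Prop :=
  NBisimAt M N k M.root N.root

/-- The submodel on the rooted upset `↑z`. -/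
def up {n : ℕ} (M : Model n) (z : M.W) : Model n where
  W := {w : M.W // M.le z w}
  le a b := M.le a.1 b.1
  refl a := M.refl a.1
  trans a b c h1 h2 := M.trans a.1 b.1 c.1 h1 h2
  antisymm a b h1 h2 := Subtype.ext (M.antisymm a.1 b.1 h1 h2)
  root := ⟨z, M.refl z⟩
  rooted w := w.2
  col a := M.col a.1
  mono a b h := M.mono a.1 b.1 h

/-- `(M, x) ≤ₖ (N, y)`: there is `z ≥ x` such that `(↑z, z)` is `k`-bisimilar
with `(N, y)`. -/
def LeBisim {n : ℕ} (M N : Model n) (k : ℕ) : Prop :=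
  ∃ z : M.W, M.le M.root z ∧ NBisim (M.up z) N k

/-- Two points of a model are bisimilar. -/
def PointsBisim {n : ℕ} (M : Model n) (a b : M.W) : Prop :=
  ∃ S : M.W → M.W → Prop,
    S a b ∧
    (∀ x y, S x y → M.col x = M.col y) ∧
    (∀ x y x', S x y → M.le x x' → ∃ y', M.le y y' ∧ S x' y') ∧
    (∀ x y y', S x y → M.le y y' → ∃ x', M.le x x' ∧ S x' y')

/-- A model over `n` variables is (`n`-)generated if it contains no two
distinct bisimilar points. -/
def Generated {n : ℕ} (M : Model n) : Prop :=
  ∀ a b : M.W, M.PointsBisim a b → a = b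

/-- Isomorphism of models: a root-preserving, color-preserving order
isomorphism. -/
def Iso {n : ℕ} (M N : Model n) : Prop :=
  ∃ f : M.W → N.W, Function.Bijective f ∧ f M.root = N.root ∧
    (∀ a b, M.le a b ↔ N.le (f a) (f b)) ∧ (∀ a, N.col (f a) = M.col a)

/-- `M` is a model over the class of posets `K`: its underlying poset is a
p-morphic image of a rooted upset of a member of `K`. -/
def InClass {n : ℕ} (K : Set Frame) (M : Model n) : Prop :=
  ∃ F ∈ K, ∃ z : F.W, PMorphicImage (F.up z) M.frame

/-- The model on the rooted upset `↑z` of a frame `F`, with coloring `c`. -/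
def ofFrame (F : Frame) (z : F.W) (n : ℕ) (c : (F.up z).W → Set (Fin n))
    (hc : ∀ a b : (F.up z).W, (F.up z).le a b → c a ⊆ c b) : Model n where
  W := (F.up z).W
  le := (F.up z).le
  refl := (F.up z).refl
  trans := (F.up z).trans
  antisymm := (F.up z).antisymm
  root := ⟨z, F.refl z⟩
  rooted w := w.2
  col := c
  mono := hc

end Model

/-! ## Boolean sums and stacks -/

/-- A (finite rooted) poset is a Boolean sum: it is rooted, covers decrease the
depth by exactly one, and every point of depth `k+1` lies below every point of
depth `k`. -/
def IsBooleanSum (F : Frame) : Prop :=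
  F.Rooted ∧
  (∀ a b da db, F.covBy a b → F.depthEq a da → F.depthEq b db → da = db + 1) ∧
  (∀ a b k, F.depthEq a (k + 1) → F.depthEq b k → F.le a b)

/-- `F` contains a `k`-stack: `k` consecutive layers (sets of points of equal
depth) each containing at least two points. -/
def HasStack (F : Frame) (k : ℕ) : Prop :=
  ∃ j : ℕ, ∀ i : ℕ, j ≤ i → i < j + k →
    ∃ a b : F.W, a ≠ b ∧ F.depthEq a i ∧ F.depthEq b i

/-! ## The posets Q₁, …, Q₈ -/

def q1le : Fin 4 → Fin 4 → Bool := fun a b =>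
  a = b || a = 0 || (a = 1 && b = 3)
def q2le : Fin 5 → Fin 5 → Bool := fun a b =>
  a = b || a = 0 || (a = 1 && (b = 3 || b = 4)) || (a = 2 && b = 4)
def q3le : Fin 5 → Fin 5 → Bool := fun a b =>
  a = b || a = 0 || (a = 1 && b = 4) || (a = 2 && (b = 3 || b = 4)) ||
    (a = 3 && b = 4)
def q4le : Fin 5 → Fin 5 → Bool := fun a b =>
  a = b || a = 0 || ((a = 1 || a = 2) && (b = 3 || b = 4))
def q5le : Fin 6 → Fin 6 → Bool := fun a b =>
  a = b || a = 0 || b = 5 || ((a = 1 || a = 2) && (b = 3 || b = 4))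
def q6le : Fin 4 → Fin 4 → Bool := fun a b =>
  a = b || a = 0 || b = 3
def q7le : Fin 5 → Fin 5 → Bool := fun a b =>
  a = b || a = 0 || (a = 1 && b = 3) || (a = 2 && b = 4)
def q8le : Fin 4 → Fin 4 → Bool := fun a b =>
  a = b || a = 0

/-- `Q₁`: root `0`; immediate successors `1`, `2`; `2` maximal; `3` the unique
(maximal) immediate successor of `1`. -/
def Q1f : Frame :=
  ⟨Fin 4, fun a b => q1le a b = true, by decide, by decide, by decide⟩
/-- `Q₂`: root `0`; immediate successors `1`, `2`; maximal points `3`, `4`;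
`1 < 3`, `1 < 4`, `2 < 4`, `2 ≮ 3`. -/
def Q2f : Frame :=
  ⟨Fin 5, fun a b => q2le a b = true, by decide, by decide, by decide⟩
/-- `Q₃`: root `0`; immediate successors `1`, `2`; `3` covers `2`; top `4`
with `1 < 4` and `3 < 4`. -/
def Q3f : Frame :=
  ⟨Fin 5, fun a b => q3le a b = true, by decide, by decide, by decide⟩
/-- `Q₄`: root `0`; `1`, `2` cover the root; maximal `3`, `4` above both `1`
and `2`. -/
def Q4f : Frame :=
  ⟨Fin 5, fun a b => q4le a b = true, by decide, by decide, by decide⟩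
/-- `Q₅`: `Q₄` with a greatest element `5` added on top. -/
def Q5f : Frame :=
  ⟨Fin 6, fun a b => q5le a b = true, by decide, by decide, by decide⟩
/-- `Q₆`: the diamond. -/
def Q6f : Frame :=
  ⟨Fin 4, fun a b => q6le a b = true, by decide, by decide, by decide⟩
/-- `Q₇`: root `0`; `1 < 3`, `2 < 4`, and no other strict relations above the
root. -/
def Q7f : Frame :=
  ⟨Fin 5, fun a b => q7le a b = true, by decide, by decide, by decide⟩
/-- `Q₈`: a root with three pairwise incomparable maximal points. -/
def Q8f : Frame :=
  ⟨Fin 4, fun a b => q8le a b = true, by decide, by decide, by decide⟩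

/-! ## Particular logics -/

/-- The one-element poset. -/
def unitFrame : Frame :=
  ⟨PUnit, fun _ _ => True, fun _ => trivial, fun _ _ _ _ _ => trivial,
    fun a b _ _ => Subsingleton.elim a b⟩

/-- The two-element chain. -/
def chain2 : Frame :=
  ⟨Bool, fun a b => a ≤ b, le_refl, fun _ _ _ => le_trans,
    fun _ _ => le_antisymm⟩

/-- Classical propositional logic: the logic of the one-element poset. -/
def CPC : Set Form := FrameLog unitFrame

/-- The logic of the two-element chain. -/
def Sme : Set Form := FrameLog chain2

/-- The weak Peirce law `(q → p) ∨ (((p → q) → p) → p)`. -/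
def wPLax : Form :=
  .or (.imp (.var 1) (.var 0))
    (.imp (.imp (.imp (.var 0) (.var 1)) (.var 0)) (.var 0))

/-- The logic `wPL = IPC ⊕ (q → p) ∨ (((p → q) → p) → p)`. -/
def wPL : Set Form := oplus IPCSet {wPLax}

/-- The bounded-width-2 axiom `⋁_{i≤2} (pᵢ → ⋁_{j≠i} pⱼ)`. -/
def bw2ax : Form :=
  .or (.imp (.var 0) (.or (.var 1) (.var 2)))
    (.or (.imp (.var 1) (.or (.var 0) (.var 2)))
      (.imp (.var 2) (.or (.var 0) (.var 1))))

/-- The axiom `¬p ∨ ¬¬p`. -/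
def kcax : Form := .or (Form.neg (.var 0)) (Form.neg (Form.neg (.var 0)))

/-- The logic `Box = wPL ⊕ bw₂ ⊕ (¬p ∨ ¬¬p)`. -/
def BoxLogic : Set Form := oplus wPL {bw2ax, kcax}

/-- The bounded-depth formulas. -/
def bd : ℕ → Form
  | 0 => .var 0
  | n + 1 => .or (.var (n + 1)) (.imp (.var (n + 1)) (bd n))

/-- The logic `BD_n = IPC ⊕ bd_n`. -/
def BD (n : ℕ) : Set Form := oplus IPCSet {bd n}

/-- A logic is of finite depth if it contains some `BD_n`. -/
def FiniteDepth (L : Set Form) : Prop := ∃ n, BD n ⊆ L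

/-! ## The Rieger–Nishimura ladder -/

/-- Points of the Rieger–Nishimura ladder: `inl k = L_k`, `inr k = R_k`. -/
abbrev RNpt : Type := ℕ ⊕ ℕ

/-- The covering relation of the Rieger–Nishimura ladder (`rnCov a b` means
`a ⋖ b`, i.e. `b` is an immediate successor of `a`). -/
inductive rnCov : RNpt → RNpt → Prop
  | ll (k : ℕ) : rnCov (.inl (k + 1)) (.inl k)
  | rr (k : ℕ) : rnCov (.inr (k + 1)) (.inr k)
  | rl (k : ℕ) : rnCov (.inr (k + 1)) (.inl k)
  | lr (k : ℕ) : rnCov (.inl (k + 2)) (.inr k)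

private def rnIdx : RNpt → ℕ
  | .inl k => 2 * k
  | .inr k => 2 * k + 1

private theorem rnCov_idx {a b : RNpt} (h : rnCov a b) : rnIdx b < rnIdx a := by
  cases h <;> simp [rnIdx] <;> omega

private theorem rnLe_idx {a b : RNpt} (h : Relation.ReflTransGen rnCov a b) :
    rnIdx b ≤ rnIdx a := by
  induction h with
  | refl => exact le_rfl
  | tail _ h₂ ih => exact le_trans (le_of_lt (rnCov_idx h₂)) ih

private theorem rnIdx_inj {a b : RNpt} (h : rnIdx a = rnIdx b) : a = b := by
  rcases a with a | a <;> rcases b with b | b <;> simp [rnIdx] at h ⊢ <;> omega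

/-- The Rieger–Nishimura ladder as a poset: the order is the reflexive
transitive closure of the covering relation. -/
def RN : Frame where
  W := RNpt
  le a b := Relation.ReflTransGen rnCov a b
  refl _ := Relation.ReflTransGen.refl
  trans _ _ _ h1 h2 := h1.trans h2
  antisymm _ _ h1 h2 := rnIdx_inj (le_antisymm (rnLe_idx h2) (rnLe_idx h1))

/-! ## Combs -/

def combLe (n : ℕ) : (Fin n ⊕ Fin n) → (Fin n ⊕ Fin n) → Prop
  | .inl i, .inl j => i ≤ j
  | .inl i, .inr j => i ≤ j
  | .inr i, .inr j => i = j
  | .inr _, .inl _ => False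

/-- The `n`-comb: base points `x_1 ≤ … ≤ x_n` (encoded `inl 0, …, inl (n-1)`)
and maximal teeth `y_1, …, y_n` (encoded `inr 0, …, inr (n-1)`), with
`x_i ≤ y_j ↔ i ≤ j` and the teeth pairwise incomparable. -/
def Comb (n : ℕ) : Frame where
  W := Fin n ⊕ Fin n
  le := combLe n
  refl := by rintro (i | i) <;> simp [combLe]
  trans := by
    rintro (i | i) (j | j) (k | k) h1 h2 <;> simp only [combLe] at * <;>
      first
        | exact le_trans h1 h2
        | exact h2 ▸ h1
  antisymm := by
    rintro (i | i) (j | j) h1 h2 <;> simp only [combLe] at * <;>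
      first
        | exact congrArg Sum.inl (le_antisymm h1 h2)
        | exact congrArg Sum.inr h1

/-- A broken `m`-comb: (isomorphic to) a subposet of the `m`-comb containing
all of the base points `x_1, …, x_m`. -/
def IsBrokenComb (F : Frame) (m : ℕ) : Prop :=
  ∃ s : Set (Comb m).W, (∀ i : Fin m, Sum.inl i ∈ s) ∧
    FrameIso F ((Comb m).restrict s)

/-- The logic of the class of all combs. -/
def LFC : Set Form := LogK {F | ∃ n, F = Comb n}

/-! ## The stacked models `M_n^k` and `N_n^k` -/

/-- Height index of a point: layer `j` (from the top) has index `j`, the root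
(`none`) has index `k+1`. -/
def stackIdx (k : ℕ) : Option (Fin (k + 1) × Bool) → ℕ
  | none => k + 1
  | some (j, _) => j

/-- Size of the color (an initial segment of the variables): the left point
(`false`) of layer `j` gets `1^{n-j}0^j`, the right point (`true`) gets
`1^{n-j-1}0^{j+1}`, and the root gets `1^r0^{n-r}`. -/
def stackColSize (n k r : ℕ) : Option (Fin (k + 1) × Bool) → ℕ
  | none => r
  | some (j, false) => n - j
  | some (j, true) => n - ((j : ℕ) + 1)

private theorem stackColSize_le (n k r : ℕ) (hr : r ≤ n - (k + 1))
    {a b : Option (Fin (k + 1) × Bool)} (h : stackIdx k b < stackIdx k a) :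
    stackColSize n k r a ≤ stackColSize n k r b := by
  rcases a with _ | ⟨j, _ | _⟩ <;> rcases b with _ | ⟨j', _ | _⟩ <;>
    simp only [stackIdx, stackColSize] at * <;> omega

/-- The common shape of `M_n^k` and `N_n^k`, with root color `1^r0^{n-r}`:
`k+1` layers of two points stacked on top of a root. -/
def stackModel (n k r : ℕ) (hr : r ≤ n - (k + 1)) : Model n where
  W := Option (Fin (k + 1) × Bool)
  le a b := a = b ∨ stackIdx k b < stackIdx k a
  refl _ := Or.inl rfl
  trans := by
    rintro a b c (rfl | h1) h2
    · exact h2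
    · rcases h2 with rfl | h2
      · exact Or.inr h1
      · exact Or.inr (h2.trans h1)
  antisymm := by
    rintro a b (rfl | h1) h2
    · rfl
    · rcases h2 with rfl | h2
      · rfl
      · omega
  root := none
  rooted := by
    rintro (_ | ⟨j, s⟩)
    · exact Or.inl rfl
    · exact Or.inr j.isLt
  col a := {i : Fin n | (i : ℕ) < stackColSize n k r a}
  mono := by
    rintro a b (rfl | h) i hi
    · exact hi
    · exact lt_of_lt_of_le hi (stackColSize_le n k r hr h)

/-- The model `M_n^k` (root color `1^{n-k-1}0^{k+1}`). -/
def Mmodel (n k : ℕ) : Model n := stackModel n k (n - (k + 1)) le_rfl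

/-- The model `N_n^k` (root color `1^{n-k-2}0^{k+2}`). -/
def Nmodel (n k : ℕ) : Model n := stackModel n k (n - (k + 2)) (by omega)

/-! ## The frames `S_n` -/

/-- Height index in `S_n`: the top point (`some none`) has index `0`, the two
points of the `j`-th middle layer have index `j+1`, and the root (`none`) has
index `n`. -/
def sIdx (n : ℕ) : Option (Option (Fin (n - 1) × Bool)) → ℕ
  | none => n
  | some none => 0
  | some (some (j, _)) => (j : ℕ) + 1

/-- The frame `S_n` (for `n ≥ 2`): the Boolean sum whose layers from top to
bottom have sizes `1, 2, …, 2, 1` (with `n - 1` layers of size `2`). -/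
def SFrame (n : ℕ) : Frame where
  W := Option (Option (Fin (n - 1) × Bool))
  le a b := a = b ∨ sIdx n b < sIdx n a
  refl _ := Or.inl rfl
  trans := by
    rintro a b c (rfl | h1) h2
    · exact h2
    · rcases h2 with rfl | h2
      · exact Or.inr h1
      · exact Or.inr (h2.trans h1)
  antisymm := by
    rintro a b (rfl | h1) h2
    · rfl
    · rcases h2 with rfl | h2
      · rfl
      · omega

/-!
Inside `M_n^k` the root has the color of a would-be left point of layer `k + 1`, and the upset
of the right point of layer `k` is a copy of `N_n^{k-1}`, so the theorem compares two points of
`M_n^k`. Call the right point of layer `i` and the left point of layer `i + 1` (the root when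
`i = k`) twins: they have the same color `1^{n-i-1}0^{i+1}`. Twins are `i`-bisimilar: the only move
of the lower twin that the upper one cannot copy, to the left point of layer `i`, is answered by
the right point of layer `i - 1`, and these two are twins again. They are not `(i + 1)`-bisimilar,
since that answer is the only one, and induction on `i` ends at layer `0`, whose right point has
no successor of color `1^n`.
-/

namespace Model

variable {n : ℕ}

structure IsBoundedMorphism (M N : Model n) (f : M.W → N.W) : Prop where
  le_map : ∀ {a b}, M.le a b → N.le (f a) (f b)
  col_map : ∀ a, N.col (f a) = M.col a
  back : ∀ {a c}, N.le (f a) c → ∃ b, M.le a b ∧ f b = c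

namespace NBisimAt

variable {M N P : Model n} {k : ℕ} {x : M.W} {y : N.W}

theorem col_eq (h : M.NBisimAt N k x y) : M.col x = N.col y := by
  obtain ⟨S, hmono, hxy, hcol, -, -⟩ := h
  suffices ∀ j a b, S j a b → S 0 a b from hcol x y (this k x y hxy)
  intro j
  induction j with
  | zero => exact fun _ _ h => h
  | succ j ih => exact fun a b h => ih a b (hmono j a b h)

theorem forth (h : M.NBisimAt N (k + 1) x y) {x' : M.W} (hx : M.le x x') :
    ∃ y', N.le y y' ∧ M.NBisimAt N k x' y' := by
  obtain ⟨S, hmono, hxy, hcol, hforth, hback⟩ := h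
  obtain ⟨y', hy, hS⟩ := hforth k x y x' (Nat.lt_succ_self k) hxy hx
  exact ⟨y', hy, S, hmono, hS, hcol, fun j a b a' hj => hforth j a b a' (by omega),
    fun j a b b' hj => hback j a b b' (by omega)⟩

theorem map {f : N.W → P.W} (hf : IsBoundedMorphism N P f) (h : M.NBisimAt N k x y) :
    M.NBisimAt P k x (f y) := by
  obtain ⟨S, hmono, hxy, hcol, hforth, hback⟩ := h
  refine ⟨fun j a c => ∃ b, S j a b ∧ f b = c, ?_, ⟨y, hxy, rfl⟩, ?_, ?_, ?_⟩
  · rintro j a _ ⟨b, hS, rfl⟩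
    exact ⟨b, hmono j a b hS, rfl⟩
  · rintro a _ ⟨b, hS, rfl⟩
    rw [hf.col_map]
    exact hcol a b hS
  · rintro j a _ a' hj ⟨b, hS, rfl⟩ ha
    obtain ⟨b', hb, hS'⟩ := hforth j a b a' hj hS ha
    exact ⟨f b', hf.le_map hb, b', hS', rfl⟩
  · rintro j a _ c hj ⟨b, hS, rfl⟩ hc
    obtain ⟨b', hb, rfl⟩ := hf.back hc
    obtain ⟨a', ha, hS'⟩ := hback j a b b' hj hS hb
    exact ⟨a', ha, b', hS', rfl⟩

theorem of_map {f : N.W → P.W} (hf : IsBoundedMorphism N P f) (h : M.NBisimAt P k x (f y)) :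
    M.NBisimAt N k x y := by
  obtain ⟨S, hmono, hxy, hcol, hforth, hback⟩ := h
  refine ⟨fun j a b => S j a (f b), fun j a b => hmono j a (f b), hxy, ?_, ?_, ?_⟩
  · intro a b hS
    rw [← hf.col_map]
    exact hcol a (f b) hS
  · intro j a b a' hj hS ha
    obtain ⟨c, hc, hS'⟩ := hforth j a (f b) a' hj hS ha
    obtain ⟨b', hb, rfl⟩ := hf.back hc
    exact ⟨b', hb, hS'⟩
  · intro j a b b' hj hS hb
    exact hback j a (f b) (f b') hj hS (hf.le_map hb)

end NBisimAt

theorem nbisimAt_map_iff {M N P : Model n} {k : ℕ} {x : M.W} {y : N.W} {f : N.W → P.W}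
    (hf : IsBoundedMorphism N P f) : M.NBisimAt P k x (f y) ↔ M.NBisimAt N k x y :=
  ⟨NBisimAt.of_map hf, NBisimAt.map hf⟩

theorem nbisimAt_self_of_symm {M : Model n} {k : ℕ} {x y : M.W}
    (S : ℕ → M.W → M.W → Prop) (hmono : ∀ j a b, S (j + 1) a b → S j a b)
    (hsymm : ∀ j a b, S j a b → S j b a) (hcol : ∀ a b, S 0 a b → M.col a = M.col b)
    (hforth : ∀ j a b a', S (j + 1) a b → M.le a a' → ∃ b', M.le b b' ∧ S j a' b')
    (hxy : S k x y) : M.NBisimAt M k x y := by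
  refine ⟨S, hmono, hxy, hcol, fun j a b a' _ => hforth j a b a', ?_⟩
  intro j a b b' _ hS hb
  obtain ⟨a', ha, hS'⟩ := hforth j b a b' (hsymm _ _ _ hS) hb
  exact ⟨a', ha, hsymm _ _ _ hS'⟩

end Model

section StackModel

variable {n k : ℕ}

def stackRight : Option (Fin (k + 1) × Bool) → Bool
  | none => false
  | some (_, x) => x

/-- The color of `a` in `M_n^k` is `1^{n-r}0^r` for `r = stackRank k a`. -/
def stackRank (k : ℕ) (a : Option (Fin (k + 1) × Bool)) : ℕ :=
  stackIdx k a + (stackRight a).toNat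

theorem stackIdx_le (a : Option (Fin (k + 1) × Bool)) : stackIdx k a ≤ k + 1 := by
  rcases a with _ | ⟨i, x⟩
  · exact le_rfl
  · exact i.isLt.le

theorem stackIdx_lt_of_stackRight {a : Option (Fin (k + 1) × Bool)} (ha : stackRight a = true) :
    stackIdx k a < k + 1 := by
  rcases a with _ | ⟨i, x⟩
  · exact absurd ha Bool.false_ne_true
  · exact i.isLt

theorem stack_ext {a b : Option (Fin (k + 1) × Bool)} (hidx : stackIdx k a = stackIdx k b)
    (hright : stackRight a = stackRight b) : a = b := by
  rcases a with _ | ⟨i, x⟩ <;> rcases b with _ | ⟨j, y⟩ <;>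
    simp only [stackIdx, stackRight] at hidx hright
  · rfl
  · exact absurd hidx (by omega)
  · exact absurd hidx (by omega)
  · rw [Fin.ext hidx, hright]

theorem stackRank_le (a : Option (Fin (k + 1) × Bool)) : stackRank k a ≤ k + 1 := by
  rcases a with _ | ⟨i, _ | _⟩ <;>
    simp only [stackRank, stackIdx, stackRight, Bool.toNat_false, Bool.toNat_true] <;> omega

theorem Mmodel_col (a : (Mmodel n k).W) :
    (Mmodel n k).col a = {i : Fin n | (i : ℕ) < n - stackRank k a} := by
  rcases a with _ | ⟨i, _ | _⟩ <;> rfl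

theorem setOf_val_lt_injective {s t : ℕ} (hs : s ≤ n) (ht : t ≤ n)
    (h : {i : Fin n | (i : ℕ) < s} = {i : Fin n | (i : ℕ) < t}) : s = t := by
  have key (i : Fin n) : (i : ℕ) < s ↔ (i : ℕ) < t := Set.ext_iff.1 h i
  by_contra hne
  rcases Nat.lt_or_gt_of_ne hne with hst | hts
  · exact lt_irrefl s ((key ⟨s, by omega⟩).2 hst)
  · exact lt_irrefl t ((key ⟨t, by omega⟩).1 hts)

theorem Mmodel_col_eq_iff (hkn : k < n) {a b : (Mmodel n k).W} :
    (Mmodel n k).col a = (Mmodel n k).col b ↔ stackRank k a = stackRank k b := by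
  rw [Mmodel_col, Mmodel_col]
  constructor
  · intro h
    have := setOf_val_lt_injective (Nat.sub_le n _) (Nat.sub_le n _) h
    have := stackRank_le a
    have := stackRank_le b
    omega
  · intro h
    rw [h]

/-- Twins are related at level `j` as long as `j` does not exceed the layer of the upper twin. -/
def twinRel (k j : ℕ) (a b : Option (Fin (k + 1) × Bool)) : Prop :=
  stackRank k a = stackRank k b ∧ (a = b ∨ j ≤ stackIdx k a ∧ j ≤ stackIdx k b)

theorem twinRel_symm {j : ℕ} {a b : Option (Fin (k + 1) × Bool)} (h : twinRel k j a b) :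
    twinRel k j b a :=
  ⟨h.1.symm, h.2.imp Eq.symm And.symm⟩

theorem twinRel_forth {j : ℕ} {a b a' : (Mmodel n k).W} (h : twinRel k (j + 1) a b)
    (ha : (Mmodel n k).le a a') : ∃ b', (Mmodel n k).le b b' ∧ twinRel k j a' b' := by
  obtain ⟨hrank, rfl | ⟨hja, hjb⟩⟩ := h
  · exact ⟨a', ha, rfl, Or.inl rfl⟩
  rcases ha with rfl | ha
  · exact ⟨b, (Mmodel n k).refl b, hrank, Or.inr ⟨by omega, by omega⟩⟩
  by_cases hb : stackIdx k a' < stackIdx k b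
  · exact ⟨a', Or.inr hb, rfl, Or.inl rfl⟩
  -- `a'` lies in the layer of `b`, so `b` is the right point of its layer and `a` its twin
  unfold stackRank at hrank
  have hra := Bool.toNat_le (stackRight a)
  have hrb := Bool.toNat_le (stackRight b)
  have hb_right : stackRight b = true := by
    have : (stackRight b).toNat = 1 := by omega
    simpa using this
  have hidx : stackIdx k a' = stackIdx k b := by omega
  cases ha' : stackRight a'
  · have hb_lt := stackIdx_lt_of_stackRight hb_right
    refine ⟨some (⟨stackIdx k b - 1, by omega⟩, true), Or.inr (show _ - 1 < _ by omega), ?_,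
      Or.inr ⟨by omega, show j ≤ stackIdx k b - 1 by omega⟩⟩
    show stackIdx k a' + (stackRight a').toNat = stackIdx k b - 1 + 1
    rw [ha', Bool.toNat_false]
    omega
  · exact ⟨a', Or.inl (stack_ext hidx.symm (hb_right.trans ha'.symm)), rfl, Or.inl rfl⟩

theorem twinRel_mono {j : ℕ} {a b : Option (Fin (k + 1) × Bool)} (h : twinRel k (j + 1) a b) :
    twinRel k j a b :=
  ⟨h.1, h.2.imp_right fun h => ⟨by omega, by omega⟩⟩

theorem nbisimAt_of_twinRel {j : ℕ} {a b : (Mmodel n k).W} (h : twinRel k j a b) :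
    (Mmodel n k).NBisimAt (Mmodel n k) j a b :=
  Model.nbisimAt_self_of_symm (twinRel k) (fun _ _ _ => twinRel_mono)
    (fun _ _ _ => twinRel_symm) (fun a b h => by rw [Mmodel_col, Mmodel_col, h.1])
    (fun _ _ _ _ => twinRel_forth) h

theorem Model.NBisimAt.twins_descend (hkn : k < n) {i : ℕ} {hi : i < k + 1}
    {u : (Mmodel n k).W} (hu : stackIdx k u = i + 1)
    (h : (Mmodel n k).NBisimAt (Mmodel n k) (i + 1) u (some (⟨i, hi⟩, true))) :
    ∃ m, ∃ hm : m < k + 1, i = m + 1 ∧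
      (Mmodel n k).NBisimAt (Mmodel n k) i (some (⟨i, hi⟩, false)) (some (⟨m, hm⟩, true)) := by
  obtain ⟨v, hv, hwv⟩ :=
    h.forth (x' := some (⟨i, hi⟩, false)) (Or.inr (by rw [hu]; simp [stackIdx]))
  have hrank : i = stackIdx k v + (stackRight v).toNat := (Mmodel_col_eq_iff hkn).1 hwv.col_eq
  rcases hv with rfl | hv
  · simp [stackIdx, stackRight] at hrank
  have hv : stackIdx k v < i := hv
  have hr := Bool.toNat_le (stackRight v)
  have hv_right : stackRight v = true := by
    have : (stackRight v).toNat = 1 := by omega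
    simpa using this
  refine ⟨stackIdx k v, by omega, by omega, ?_⟩
  rwa [stack_ext (a := v) (b := some (⟨stackIdx k v, by omega⟩, true)) rfl hv_right] at hwv

theorem not_nbisimAt_twins (hkn : k < n) (i : ℕ) (hi : i < k + 1) {u : (Mmodel n k).W}
    (hu : stackIdx k u = i + 1) :
    ¬ (Mmodel n k).NBisimAt (Mmodel n k) (i + 1) u (some (⟨i, hi⟩, true)) := by
  induction i generalizing u with
  | zero =>
    intro h
    obtain ⟨m, -, hm, -⟩ := h.twins_descend hkn hu
    omega
  | succ i ih =>
    intro h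
    obtain ⟨m, hm, hmi, h'⟩ := h.twins_descend hkn hu
    obtain rfl : m = i := by omega
    exact ih hm rfl h'

/-- `N_n^k` as the upset of the right point of the bottom layer of `M_n^{k+1}`. -/
def stackEmbed : Option (Fin (k + 1) × Bool) → Option (Fin (k + 2) × Bool)
  | none => some (Fin.last (k + 1), true)
  | some (i, x) => some (i.castSucc, x)

theorem stackIdx_stackEmbed (a : Option (Fin (k + 1) × Bool)) :
    stackIdx (k + 1) (stackEmbed a) = stackIdx k a := by
  rcases a with _ | ⟨i, x⟩ <;> rfl

theorem isBoundedMorphism_stackEmbed :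
    Model.IsBoundedMorphism (Nmodel n k) (Mmodel n (k + 1)) stackEmbed where
  le_map := by
    rintro a b (rfl | h)
    · exact Or.inl rfl
    · exact Or.inr ((stackIdx_stackEmbed b).trans_lt (h.trans_eq (stackIdx_stackEmbed a).symm))
  col_map := by
    rintro (_ | ⟨i, _ | _⟩) <;> rfl
  back := by
    rintro a c (h | h)
    · exact ⟨a, Or.inl rfl, h⟩
    replace h : stackIdx (k + 1) c < stackIdx k a := h.trans_eq (stackIdx_stackEmbed a)
    have := stackIdx_le a
    rcases c with _ | ⟨⟨j, _⟩, x⟩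
    · exact absurd h (Nat.not_lt.2 (this.trans (Nat.le_succ _)))
    have hja : j < stackIdx k a := h
    exact ⟨some (⟨j, by omega⟩, x), Or.inr h, rfl⟩

end StackModel

theorem statement14_general (n k : ℕ) (hk : 1 ≤ k) (hkn : k + 1 < n) :
    (Mmodel n k).NBisim (Nmodel n (k - 1)) k ∧
    ¬ (Mmodel n k).NBisim (Nmodel n (k - 1)) (k + 1) := by
  obtain ⟨k, rfl⟩ : ∃ k', k = k' + 1 := ⟨k - 1, by omega⟩
  rw [Nat.add_sub_cancel]
  have hf := isBoundedMorphism_stackEmbed (n := n) (k := k)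
  refine ⟨(Model.nbisimAt_map_iff hf).1 ?_, fun h => ?_⟩
  · exact nbisimAt_of_twinRel ⟨rfl, Or.inr ⟨Nat.le_succ _, le_rfl⟩⟩
  · exact not_nbisimAt_twins (by omega) (k + 1) _ rfl ((Model.nbisimAt_map_iff hf).2 h)

/-- Let `n > 2` and `1 ≤ k` with `k + 1 < n`. Then the model
`M_n^k` is `k`-bisimilar, but not `(k+1)`-bisimilar, to the model `N_n^{k-1}`. -/
theorem statement14 (n k : ℕ) (hn : 2 < n) (hk : 1 ≤ k) (hkn : k + 1 < n) :
    (Mmodel n k).NBisim (Nmodel n (k - 1)) k ∧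
    ¬ (Mmodel n k).NBisim (Nmodel n (k - 1)) (k + 1) :=
  statement14_general n k hk hkn
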